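/- Let d be a positive integer, δ ∈ [1/√d, 1], and let m be the integer with 2^{m/2} < δ√d ≤ 2^{(m+1)/2}. Then for every 0 < c ≤ 1 and every a ∈ ℝ^d, max{uᵀa : u ∈ ℝ^d, ‖u‖_{ℓ2} ≤ 1, ‖u‖_{ℓ∞} ≤ δ} ≤ (2/c)·max{wᵀa : w ∈ ℝ^d, ‖w‖_{ℓ2} ≤ c, and every coordinate of w belongs to {± c·2^{j/2}/√(2d) : j = 0,…,m}}. -/

import Mathlib

open scoped BigOperators

namespace IncoherentTensor

variable {k : ℕ}

/-- A `k`-th order tensor in `ℝ^{d 1 × ⋯ × d k}`. -/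
abbrev Tensor (d : Fin k → ℕ) : Type := (∀ j, Fin (d j)) → ℝ

variable {d : Fin k → ℕ}

/-- Entrywise inner product of tensors. -/
noncomputable def tinner (X Y : Tensor d) : ℝ := ∑ a : ∀ j, Fin (d j), X a * Y a

/-- Hilbert–Schmidt (entrywise ℓ2) norm. -/
noncomputable def hsNorm (X : Tensor d) : ℝ := Real.sqrt (tinner X X)

/-- Largest absolute entry. -/
noncomputable def maxNorm (X : Tensor d) : ℝ := ⨆ a, |X a|

/-- Euclidean norm of a vector. -/
noncomputable def l2 {n : ℕ} (u : Fin n → ℝ) : ℝ := Real.sqrt (∑ i, u i ^ 2)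

/-- Supremum norm of a vector. -/
noncomputable def linf {n : ℕ} (u : Fin n → ℝ) : ℝ := ⨆ i, |u i|

/-- Rank-one tensor `u_1 ⊗ ⋯ ⊗ u_k`. -/
def rankOne (u : ∀ j, Fin (d j) → ℝ) : Tensor d := fun a => ∏ j, u j (a j)

/-- Tensor spectral norm. -/
noncomputable def spectralNorm (X : Tensor d) : ℝ :=
  sSup {r | ∃ u : ∀ j, Fin (d j) → ℝ, (∀ j, l2 (u j) ≤ 1) ∧ r = tinner X (rankOne u)}

/-- Tensor nuclear norm. -/
noncomputable def nuclearNorm (X : Tensor d) : ℝ :=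
  sSup {r | ∃ Y : Tensor d, spectralNorm Y ≤ 1 ∧ r = tinner X Y}

/-- The set `U(δ)` of rank-one tensors satisfying the incoherence constraints in all but
two directions. -/
def Uset (δ : Fin k → ℝ) : Set (Tensor d) :=
  {Y | ∃ j1 j2 : Fin k, j1 < j2 ∧ ∃ u : ∀ j, Fin (d j) → ℝ,
    (∀ j, l2 (u j) ≤ 1) ∧ (∀ j, j ≠ j1 → j ≠ j2 → linf (u j) ≤ δ j) ∧ Y = rankOne u}

/-- Incoherent spectral norm `‖X‖_{∘,δ}`. -/
noncomputable def onorm (δ : Fin k → ℝ) (X : Tensor d) : ℝ :=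
  sSup {r | ∃ Y ∈ Uset (d := d) δ, r = tinner Y X}

/-- Incoherent nuclear norm `‖X‖_{⋆,δ}`. -/
noncomputable def starNorm (δ : Fin k → ℝ) (X : Tensor d) : ℝ :=
  sSup {r | ∃ Y : Tensor d, onorm δ Y ≤ 1 ∧ r = tinner Y X}

/-- The span `L_j(X)` of the mode-`j` fibers of `X`. -/
noncomputable def fiberSpan (X : Tensor d) (j : Fin k) :
    Submodule ℝ (EuclideanSpace ℝ (Fin (d j))) :=
  Submodule.span ℝ {v | ∃ a : ∀ i, Fin (d i), v = fun i => X (Function.update a j i)}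

/-- Tucker rank `r_j(X) = dim L_j(X)`. -/
noncomputable def tuckerRank (X : Tensor d) (j : Fin k) : ℕ :=
  Module.finrank ℝ (fiberSpan X j)

/-- Orthogonal projection `P_j(X)` of `ℝ^{d_j}` onto `L_j(X)`. -/
noncomputable def projMode (X : Tensor d) (j : Fin k) :
    EuclideanSpace ℝ (Fin (d j)) →L[ℝ] EuclideanSpace ℝ (Fin (d j)) :=
  (fiberSpan X j).subtypeL.comp (Submodule.orthogonalProjectionOnto (fiberSpan X j))

/-- The matrix of `P_j(X)` in the standard basis. -/
noncomputable def Pmat (X : Tensor d) (j : Fin k) : Matrix (Fin (d j)) (Fin (d j)) ℝ :=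
  Matrix.of fun a b => projMode X j (EuclideanSpace.single b 1) a

/-- Action of a Kronecker product `A_1 ⊗ ⋯ ⊗ A_k` of matrices on a tensor. -/
noncomputable def kronApply (A : ∀ j, Matrix (Fin (d j)) (Fin (d j)) ℝ) (W : Tensor d) :
    Tensor d :=
  fun a => ∑ b : ∀ j, Fin (d j), (∏ j, A j (a j) (b j)) * W b

/-- `Q⁰_X = P_1 ⊗ ⋯ ⊗ P_k`. -/
noncomputable def Q0 (X : Tensor d) (W : Tensor d) : Tensor d :=
  kronApply (fun j => Pmat X j) W

/-- `Q_X = Q⁰_X + Σ_j P_1 ⊗ ⋯ ⊗ P_j^⊥ ⊗ ⋯ ⊗ P_k`. -/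
noncomputable def QX (X : Tensor d) (W : Tensor d) : Tensor d :=
  Q0 X W + ∑ j : Fin k, kronApply (fun l => if l = j then 1 - Pmat X l else Pmat X l) W

/-- `Q_X^⊥ = I − Q_X`. -/
noncomputable def Qperp (X : Tensor d) (W : Tensor d) : Tensor d := W - QX X W

/-- Coherence `μ(U)` of a subspace of `ℝ^n`. -/
noncomputable def coherence {n : ℕ} (U : Submodule ℝ (EuclideanSpace ℝ (Fin n))) : ℝ :=
  ((n : ℝ) / (Module.finrank ℝ U : ℝ)) *
    ⨆ i : Fin n, ‖Submodule.orthogonalProjectionOnto U (EuclideanSpace.single i 1)‖ ^ 2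

/-- Probability of an event on a finite sample space, under the uniform distribution. -/
noncomputable def prob {Ω : Type*} [Fintype Ω] (P : Ω → Prop) : ℝ :=
  (Nat.card {ω : Ω // P ω} : ℝ) / (Fintype.card Ω : ℝ)

/-- `P_ω X` retains the entry `ω` of `X` and zeroes out the rest. -/
noncomputable def Pentry (ω : ∀ j, Fin (d j)) (X : Tensor d) : Tensor d :=
  fun a => if a = ω then X a else 0

/-- `P_Ω X` retains the entries of `X` on `Ω` and zeroes out the rest. -/
noncomputable def POmega (S : Finset (∀ j, Fin (d j))) (X : Tensor d) : Tensor d :=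
  fun a => if a ∈ S then X a else 0

/-- The empirical average `X̄ = (X_1 + ⋯ + X_n)/n` of `X_i = (d_1⋯d_k)·P_{ω_i} A`. -/
noncomputable def sampleAvg (A : Tensor d) (n : ℕ) (s : Fin n → ∀ j, Fin (d j)) : Tensor d :=
  fun a => (1 / (n : ℝ)) * ∑ i : Fin n, (∏ j, (d j : ℝ)) * Pentry (s i) A a

/-- `Y` is `μ`-incoherent. -/
noncomputable def muIncoherent (μ : ℝ) (Y : Tensor d) : Prop :=
  ∀ j, ∀ u : EuclideanSpace ℝ (Fin (d j)), ‖u‖ ≤ 1 →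
    linf (fun i => projMode Y j u i) ≤ Real.sqrt (μ * (tuckerRank Y j : ℝ) / (d j : ℝ))

/-!
Fix `u` with `‖u‖₂ ≤ 1` and `‖u‖_∞ ≤ δ`. Round each `d uᵢ²` down to a dyadic level: take the
least `jᵢ` with `d uᵢ² ≤ 2^(jᵢ+1)`. The bound on `δ √d` forces `jᵢ ≤ m`, and minimality gives
`2^jᵢ ≤ max (d uᵢ²) 1 ≤ d uᵢ² + 1`, so `∑ 2^jᵢ ≤ 2d`. Hence the grid vector
`wᵢ = sign(aᵢ) c 2^(jᵢ/2) / √(2d)` has `‖w‖₂ ≤ c`, while `|uᵢ| ≤ (2/c) |wᵢ|` coordinatewise,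
so `uᵀa ≤ (2/c) wᵀa`.
-/

lemma abs_le_l2 {n : ℕ} (u : Fin n → ℝ) (i : Fin n) : |u i| ≤ l2 u :=
  Real.abs_le_sqrt <| Finset.single_le_sum (fun j _ => sq_nonneg (u j)) (Finset.mem_univ i)

lemma abs_le_linf {n : ℕ} (u : Fin n → ℝ) (i : Fin n) : |u i| ≤ linf u :=
  le_ciSup (f := fun i => |u i|) (Set.finite_range _).bddAbove i

lemma sum_sq_le_one_of_l2_le_one {n : ℕ} {u : Fin n → ℝ} (hu : l2 u ≤ 1) : ∑ i, u i ^ 2 ≤ 1 :=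
  Real.sqrt_le_one.mp hu

lemma l2_le_of_sum_sq_le {n : ℕ} {w : Fin n → ℝ} {c : ℝ} (hc : 0 ≤ c)
    (hw : ∑ i, w i ^ 2 ≤ c ^ 2) : l2 w ≤ c :=
  (Real.sqrt_le_left hc).mpr hw

lemma sum_mul_le_of_l2_le {n : ℕ} {w : Fin n → ℝ} {c : ℝ} (hw : l2 w ≤ c) (a : Fin n → ℝ) :
    ∑ i, w i * a i ≤ c * ∑ i, |a i| := by
  rw [Finset.mul_sum]
  refine Finset.sum_le_sum fun i _ => ?_
  calc w i * a i ≤ |w i| * |a i| := by rw [← abs_mul]; exact le_abs_self _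
    _ ≤ c * |a i| := by gcongr; exact (abs_le_l2 w i).trans hw

lemma rpow_div_two_sq {b : ℝ} (hb : 0 ≤ b) (x : ℝ) : (b ^ (x / 2)) ^ 2 = b ^ x := by
  rw [← Real.rpow_mul_natCast hb]
  norm_num

lemma exists_two_pow_le_max_one_and_le_two_pow_succ {x : ℝ} {m : ℕ} (hx : x ≤ 2 ^ (m + 1)) :
    ∃ j ≤ m, (2 : ℝ) ^ j ≤ max x 1 ∧ x ≤ 2 ^ (j + 1) := by
  classical
  have h : ∃ j, x ≤ (2 : ℝ) ^ (j + 1) := ⟨m, hx⟩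
  refine ⟨Nat.find h, Nat.find_min' h hx, ?_, Nat.find_spec h⟩
  rcases hj : Nat.find h with _ | k
  · simp
  · have hk : ¬ x ≤ (2 : ℝ) ^ (k + 1) := Nat.find_min h (by omega)
    exact le_max_of_le_left (not_le.mp hk).le

noncomputable def gridLevel (c : ℝ) (n j : ℕ) : ℝ :=
  c * (2 : ℝ) ^ ((j : ℝ) / 2) / Real.sqrt (2 * n)

def IsGridVector {n : ℕ} (c : ℝ) (m : ℕ) (w : Fin n → ℝ) : Prop :=
  ∀ i, ∃ j ≤ m, w i = gridLevel c n j ∨ w i = -gridLevel c n j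

lemma gridLevel_nonneg {c : ℝ} (hc : 0 ≤ c) (n j : ℕ) : 0 ≤ gridLevel c n j := by
  unfold gridLevel
  positivity

lemma gridLevel_sq (c : ℝ) (n j : ℕ) : gridLevel c n j ^ 2 = c ^ 2 * 2 ^ j / (2 * n) := by
  rw [gridLevel, div_pow, mul_pow, rpow_div_two_sq zero_le_two, Real.rpow_natCast,
    Real.sq_sqrt (by positivity)]

lemma abs_le_two_div_mul_gridLevel {c x : ℝ} (hc : 0 < c) {n j : ℕ} (hn : 0 < n)
    (hx : n * x ^ 2 ≤ 2 ^ (j + 1)) : |x| ≤ 2 / c * gridLevel c n j := by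
  have hn' : (0 : ℝ) < n := by exact_mod_cast hn
  refine abs_le_of_sq_le_sq ?_ (mul_nonneg (by positivity) (gridLevel_nonneg hc.le n j))
  calc x ^ 2 ≤ 2 ^ (j + 1) / n := by rw [le_div_iff₀' hn']; exact hx
    _ = (2 / c * gridLevel c n j) ^ 2 := by
      rw [mul_pow, gridLevel_sq]
      field_simp
      ring

lemma natCast_mul_sq_le_two_pow_of_linf_le {n m : ℕ} {δ : ℝ} {u : Fin n → ℝ} (hu : linf u ≤ δ)
    (hδ : δ * Real.sqrt n ≤ (2 : ℝ) ^ (((m : ℝ) + 1) / 2)) (i : Fin n) :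
    n * u i ^ 2 ≤ 2 ^ (m + 1) := by
  have hui : |u i| * Real.sqrt n ≤ (2 : ℝ) ^ (((m : ℝ) + 1) / 2) :=
    (mul_le_mul_of_nonneg_right ((abs_le_linf u i).trans hu) (Real.sqrt_nonneg _)).trans hδ
  have := pow_le_pow_left₀ (by positivity) hui 2
  rwa [mul_pow, sq_abs, Real.sq_sqrt n.cast_nonneg, rpow_div_two_sq zero_le_two,
    ← Nat.cast_succ, Real.rpow_natCast, mul_comm] at this

lemma exists_isGridVector_sum_mul_le {n m : ℕ} {c : ℝ} (hc : 0 < c) (a : Fin n → ℝ)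
    {u : Fin n → ℝ} (hu : l2 u ≤ 1) (hum : ∀ i, n * u i ^ 2 ≤ 2 ^ (m + 1)) :
    ∃ w, l2 w ≤ c ∧ IsGridVector c m w ∧ ∑ i, u i * a i ≤ 2 / c * ∑ i, w i * a i := by
  choose j hjm hj_le hj_ge using fun i => exists_two_pow_le_max_one_and_le_two_pow_succ (hum i)
  set w : Fin n → ℝ := fun i => if 0 ≤ a i then gridLevel c n (j i) else -gridLevel c n (j i)
  have hw_sq (i : Fin n) : w i ^ 2 = gridLevel c n (j i) ^ 2 := by
    simp only [w]; split_ifs <;> ring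
  have hw_mul (i : Fin n) : w i * a i = gridLevel c n (j i) * |a i| := by
    simp only [w]
    split_ifs with ha
    · rw [abs_of_nonneg ha]
    · rw [abs_of_neg (not_le.mp ha)]; ring
  refine ⟨w, ?_, fun i => ⟨j i, hjm i, by simp only [w]; split_ifs <;> simp⟩, ?_⟩
  · refine l2_le_of_sum_sq_le hc.le ?_
    rcases Nat.eq_zero_or_pos n with rfl | hn
    · simpa using sq_nonneg c
    have hlevel (i : Fin n) : (2 : ℝ) ^ j i ≤ n * u i ^ 2 + 1 :=
      (hj_le i).trans (max_le (by linarith) (le_add_of_nonneg_left (by positivity)))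
    calc ∑ i, w i ^ 2 = c ^ 2 / (2 * n) * ∑ i, (2 : ℝ) ^ j i := by
          simp only [hw_sq, gridLevel_sq, Finset.mul_sum]; ring_nf
      _ ≤ c ^ 2 / (2 * n) * ∑ i, ((n : ℝ) * u i ^ 2 + 1) := by
          gcongr with i; exact hlevel i
      _ ≤ c ^ 2 / (2 * n) * (2 * n) := by
          gcongr
          rw [Finset.sum_add_distrib, ← Finset.mul_sum]
          simp only [Finset.sum_const, Finset.card_univ, Fintype.card_fin, nsmul_eq_mul, mul_one]
          nlinarith [sum_sq_le_one_of_l2_le_one hu]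
      _ = c ^ 2 := by field_simp
  · rw [Finset.mul_sum]
    refine Finset.sum_le_sum fun i _ => ?_
    calc u i * a i ≤ |u i| * |a i| := by rw [← abs_mul]; exact le_abs_self _
      _ ≤ 2 / c * gridLevel c n (j i) * |a i| := by
          gcongr
          exact abs_le_two_div_mul_gridLevel hc i.pos (hj_ge i)
      _ = 2 / c * (w i * a i) := by rw [hw_mul, mul_assoc]

theorem statement4_general (d : ℕ) (δ : ℝ) (m : ℕ)
    (hm2 : δ * Real.sqrt d ≤ (2 : ℝ) ^ (((m : ℝ) + 1) / 2))
    (c : ℝ) (hc : 0 < c) (a : Fin d → ℝ) :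
    sSup {x | ∃ u : Fin d → ℝ, l2 u ≤ 1 ∧ linf u ≤ δ ∧ x = ∑ i, u i * a i} ≤
      (2 / c) * sSup {x | ∃ w : Fin d → ℝ, l2 w ≤ c ∧
        (∀ i, ∃ j : ℕ, j ≤ m ∧
          (w i = c * (2 : ℝ) ^ ((j : ℝ) / 2) / Real.sqrt (2 * d) ∨
           w i = -(c * (2 : ℝ) ^ ((j : ℝ) / 2) / Real.sqrt (2 * d)))) ∧
        x = ∑ i, w i * a i} := by
  set S := {x | ∃ w : Fin d → ℝ, l2 w ≤ c ∧ IsGridVector c m w ∧ x = ∑ i, w i * a i}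
  have hS : BddAbove S := ⟨c * ∑ i, |a i|, by
    rintro _ ⟨w, hw, -, rfl⟩
    exact sum_mul_le_of_l2_le hw a⟩
  have key (u : Fin d → ℝ) (hu : l2 u ≤ 1) (hum : ∀ i, d * u i ^ 2 ≤ 2 ^ (m + 1)) :
      ∑ i, u i * a i ≤ 2 / c * sSup S := by
    obtain ⟨w, hw, hgrid, hle⟩ := exists_isGridVector_sum_mul_le hc a hu hum
    exact hle.trans <| by gcongr; exact le_csSup hS ⟨w, hw, hgrid, rfl⟩
  refine Real.sSup_le ?_ ?_
  · rintro _ ⟨u, hu, huδ, rfl⟩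
    exact key u hu (natCast_mul_sq_le_two_pow_of_linf_le huδ hm2)
  -- `Real.sSup_le` also asks for `0 ≤` the bound, for the junk value `sSup ∅ = 0`.
  · have h0 := key 0 (by simp [l2]) (by simp)
    rwa [Finset.sum_eq_zero fun i _ => by rw [Pi.zero_apply, zero_mul]] at h0

/-- first part of Lemma A / Lemma 9 extension: discretization of the
`ℓ2`/`ℓ∞`-constrained linear maximization. -/
theorem statement4 (d : ℕ) (hd : 0 < d) (δ : ℝ)
    (hδ : δ ∈ Set.Icc (1 / Real.sqrt d) 1)
    (m : ℕ) (hm1 : (2 : ℝ) ^ ((m : ℝ) / 2) < δ * Real.sqrt d)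
    (hm2 : δ * Real.sqrt d ≤ (2 : ℝ) ^ (((m : ℝ) + 1) / 2))
    (c : ℝ) (hc : 0 < c) (hc1 : c ≤ 1) (a : Fin d → ℝ) :
    sSup {x | ∃ u : Fin d → ℝ, l2 u ≤ 1 ∧ linf u ≤ δ ∧ x = ∑ i, u i * a i} ≤
      (2 / c) * sSup {x | ∃ w : Fin d → ℝ, l2 w ≤ c ∧
        (∀ i, ∃ j : ℕ, j ≤ m ∧
          (w i = c * (2 : ℝ) ^ ((j : ℝ) / 2) / Real.sqrt (2 * d) ∨
           w i = -(c * (2 : ℝ) ^ ((j : ℝ) / 2) / Real.sqrt (2 * d)))) ∧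
        x = ∑ i, w i * a i} :=
  statement4_general d δ m hm2 c hc a

end IncoherentTensor
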